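/- Every closed rectifiable curve of length strictly less than 2π on the unit 2-sphere (with its intrinsic angular metric d(u,v) = arccos⟨u,v⟩) has radius strictly less than π/2: there exist a point q on the sphere and r < π/2 such that d(q,x) ≤ r for every point x of the curve. In particular, every closed geodesic polygon on the unit sphere of total length < 2π is contained in an open metric ball of radius < π/2. -/

import Mathlib

open Real Set

noncomputable section

namespace DomCAT

/-! ### Model-plane comparison quantities -/

/-- Inverse hyperbolic cosine. -/
def arcosh (x : ℝ) : ℝ := Real.log (x + Real.sqrt (x ^ 2 - 1))

/-- Cosine of the angle of the hyperbolic comparison triangle at the vertex between the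
sides of lengths `b` and `c`, opposite to the side of length `a`
(hyperbolic law of cosines). -/
def hypAngleCos (a b c : ℝ) : ℝ :=
  (Real.cosh b * Real.cosh c - Real.cosh a) / (Real.sinh b * Real.sinh c)

/-- The comparison angle in `ℍ²` at the vertex between the sides of lengths `b`, `c`,
opposite to the side of length `a`. -/
def hypCompAngle (a b c : ℝ) : ℝ := Real.arccos (hypAngleCos a b c)

/-- Distance, in the hyperbolic comparison triangle with side lengths `a, b, c`
(`a` opposite to the base vertex), between the point at arclength `s` along the side of
length `b` and the point at arclength `t` along the side of length `c`. -/
def hypCompDist (a b c s t : ℝ) : ℝ :=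
  arcosh (Real.cosh s * Real.cosh t - Real.sinh s * Real.sinh t * hypAngleCos a b c)

/-- Spherical analogue of `hypAngleCos` (spherical law of cosines). -/
def sphAngleCos (a b c : ℝ) : ℝ :=
  (Real.cos a - Real.cos b * Real.cos c) / (Real.sin b * Real.sin c)

/-- Spherical analogue of `hypCompDist`, on the unit sphere. -/
def sphCompDist (a b c s t : ℝ) : ℝ :=
  Real.arccos (Real.cos s * Real.cos t + Real.sin s * Real.sin t * sphAngleCos a b c)

/-- Cosine of the Euclidean comparison angle opposite to `a`, between sides `b`, `c`. -/
def eucAngleCos (a b c : ℝ) : ℝ := (b ^ 2 + c ^ 2 - a ^ 2) / (2 * b * c)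

/-- Euclidean analogue of `hypCompDist`. -/
def eucCompDist (a b c s t : ℝ) : ℝ :=
  Real.sqrt (s ^ 2 + t ^ 2 - 2 * s * t * eucAngleCos a b c)

open Classical in
/-- Comparison distance in the model plane `M_κ` for `κ ∈ {-1, 0, 1}`. -/
def modelCompDist (κ a b c s t : ℝ) : ℝ :=
  if κ = 1 then sphCompDist a b c s t
  else if κ = 0 then eucCompDist a b c s t
  else hypCompDist a b c s t

/-! ### Geodesics and CAT(κ) spaces -/

/-- `γ` is a unit-speed parametrization on `[0, dist x y]` of a geodesic from `x` to `y`. -/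
def IsGeodesicParam {X : Type*} [MetricSpace X] (γ : ℝ → X) (x y : X) : Prop :=
  γ 0 = x ∧ γ (dist x y) = y ∧
    ∀ s ∈ Set.Icc (0 : ℝ) (dist x y), ∀ t ∈ Set.Icc (0 : ℝ) (dist x y),
      dist (γ s) (γ t) = |s - t|

/-- A geodesic metric space: any two points are joined by a geodesic. -/
def GeodesicSpace (X : Type*) [MetricSpace X] : Prop :=
  ∀ x y : X, ∃ γ : ℝ → X, IsGeodesicParam γ x y

/-- `X` is a CAT(-1) space: it is geodesic and for every geodesic triangle the comparison
map from the comparison triangle in `ℍ²` is 1-Lipschitz (expressed via the hyperbolic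
law of cosines, for pairs of points on two sides issuing from a common vertex). -/
def IsCATMinusOne (X : Type*) [MetricSpace X] : Prop :=
  GeodesicSpace X ∧
    ∀ (x y z : X) (γ₁ γ₂ : ℝ → X), IsGeodesicParam γ₁ x y → IsGeodesicParam γ₂ x z →
      ∀ s ∈ Set.Icc (0 : ℝ) (dist x y), ∀ t ∈ Set.Icc (0 : ℝ) (dist x z),
        dist (γ₁ s) (γ₂ t) ≤ hypCompDist (dist y z) (dist x y) (dist x z) s t

/-- `X` is a CAT(1) space: it is `π`-geodesic and every geodesic triangle of perimeter
`< 2π` satisfies the comparison inequality with the unit sphere. -/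
def IsCATOne (X : Type*) [MetricSpace X] : Prop :=
  (∀ x y : X, dist x y < π → ∃ γ : ℝ → X, IsGeodesicParam γ x y) ∧
    ∀ (x y z : X) (γ₁ γ₂ : ℝ → X), IsGeodesicParam γ₁ x y → IsGeodesicParam γ₂ x z →
      dist x y + dist y z + dist z x < 2 * π →
      ∀ s ∈ Set.Icc (0 : ℝ) (dist x y), ∀ t ∈ Set.Icc (0 : ℝ) (dist x z),
        dist (γ₁ s) (γ₂ t) ≤ sphCompDist (dist y z) (dist x y) (dist x z) s t

/-- `X` is a CAT(κ) space, for `κ ∈ {-1, 0, 1}`. -/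
def IsCATKappa (κ : ℝ) (X : Type*) [MetricSpace X] : Prop :=
  (∀ x y : X, (κ = 1 → dist x y < π) → ∃ γ : ℝ → X, IsGeodesicParam γ x y) ∧
    ∀ (x y z : X) (γ₁ γ₂ : ℝ → X), IsGeodesicParam γ₁ x y → IsGeodesicParam γ₂ x z →
      (κ = 1 → dist x y + dist y z + dist z x < 2 * π) →
      ∀ s ∈ Set.Icc (0 : ℝ) (dist x y), ∀ t ∈ Set.Icc (0 : ℝ) (dist x z),
        dist (γ₁ s) (γ₂ t) ≤ modelCompDist κ (dist y z) (dist x y) (dist x z) s t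

/-- `M` is (a copy of) the model plane `M_κ` of curvature `κ ∈ {-1,0,1}`: it is geodesic,
every geodesic triangle is isometric to its model comparison triangle, and every
admissible triple of side lengths is realized by some triangle. -/
structure IsModelPlane (κ : ℝ) (M : Type*) [MetricSpace M] : Prop where
  nonempty : Nonempty M
  geod : ∀ x y : M, (κ = 1 → dist x y < π) → ∃ γ : ℝ → M, IsGeodesicParam γ x y
  comp_eq : ∀ (x y z : M) (γ₁ γ₂ : ℝ → M), IsGeodesicParam γ₁ x y → IsGeodesicParam γ₂ x z →
    (κ = 1 → dist x y + dist y z + dist z x < 2 * π) →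
    ∀ s ∈ Set.Icc (0 : ℝ) (dist x y), ∀ t ∈ Set.Icc (0 : ℝ) (dist x z),
      dist (γ₁ s) (γ₂ t) = modelCompDist κ (dist y z) (dist x y) (dist x z) s t
  realize : ∀ a b c : ℝ, 0 ≤ a → 0 ≤ b → 0 ≤ c → a ≤ b + c → b ≤ a + c → c ≤ a + b →
    (κ = 1 → a + b + c < 2 * π) → ∃ x y z : M, dist y z = a ∧ dist x y = b ∧ dist x z = c

/-- The (metric) segment between `x` and `y`: in a uniquely geodesic space this is the
geodesic `[xy]`. -/
def mSeg {X : Type*} [MetricSpace X] (x y : X) : Set X :=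
  {p | dist x p + dist p y = dist x y}

/-- The solid triangle (convex hull of a geodesic triangle in a uniquely geodesic space)
with vertices `x`, `y`, `z`: the union of the segments from `x` to points of `[yz]`. -/
def mTriangle {X : Type*} [MetricSpace X] (x y z : X) : Set X :=
  ⋃ p ∈ mSeg y z, mSeg x p

/-- Metric convexity of a subset. -/
def MConvex {M : Type*} [MetricSpace M] (D : Set M) : Prop :=
  ∀ x ∈ D, ∀ y ∈ D, mSeg x y ⊆ D

/-! ### Alexandrov angles -/

/-- Euclidean comparison angle between sides of lengths `b`, `c` with opposite side `a`. -/
def eucCompAngle (b c a : ℝ) : ℝ := Real.arccos (eucAngleCos a b c)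

/-- The Alexandrov angle between the geodesics `γ₁` and `γ₂` issuing from a common point
is `α`: the Euclidean comparison angles converge to `α` as both parameters tend to `0⁺`. -/
def HasAngleAt {X : Type*} [MetricSpace X] (γ₁ γ₂ : ℝ → X) (α : ℝ) : Prop :=
  Filter.Tendsto (fun p : ℝ × ℝ => eucCompAngle p.1 p.2 (dist (γ₁ p.1) (γ₂ p.2)))
    ((nhdsWithin 0 (Set.Ioi 0)) ×ˢ (nhdsWithin 0 (Set.Ioi 0))) (nhds α)

/-- `∠ₓ(y, z) = α`: the Alexandrov angle at `x` between the geodesics `[xy]` and `[xz]`. -/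
def AngleBetween {X : Type*} [MetricSpace X] (x y z : X) (α : ℝ) : Prop :=
  ∃ γ₁ γ₂ : ℝ → X, IsGeodesicParam γ₁ x y ∧ IsGeodesicParam γ₂ x z ∧ HasAngleAt γ₁ γ₂ α

/-- The triple `(a, b, c)` spans a degenerate (flat) triangle: one of the triangle
inequalities is an equality. -/
def DegenTriple {X : Type*} [MetricSpace X] (a b c : X) : Prop :=
  dist a c = dist a b + dist b c ∨ dist a b = dist a c + dist c b ∨
    dist b c = dist b a + dist a c

/-! ### Isometric actions, domination, surface groups -/

/-- `ρ : Γ → Isom(X)`: an action of `Γ` on `X` by isometries. -/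
structure IsIsomAction (Γ : Type*) [Group Γ] {X : Type*} [MetricSpace X]
    (ρ : Γ → X → X) : Prop where
  isom : ∀ γ : Γ, Isometry (ρ γ)
  one_act : ∀ x, ρ 1 x = x
  mul_act : ∀ γ δ x, ρ (γ * δ) x = ρ γ (ρ δ x)

/-- `f` is `(ρX, ρY)`-equivariant. -/
def EquivariantMap {Γ X Y : Type*} [Group Γ] (ρX : Γ → X → X) (ρY : Γ → Y → Y)
    (f : X → Y) : Prop :=
  ∀ γ x, f (ρX γ x) = ρY γ (f x)

/-- `ρX` dominates `ρY`: there is a 1-Lipschitz equivariant map. -/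
def Dominates {Γ X Y : Type*} [Group Γ] [MetricSpace X] [MetricSpace Y]
    (ρX : Γ → X → X) (ρY : Γ → Y → Y) : Prop :=
  ∃ f : X → Y, LipschitzWith 1 f ∧ EquivariantMap ρX ρY f

/-- `ρX` strictly dominates `ρY`: there is a `c`-Lipschitz equivariant map with `c < 1`. -/
def StrictlyDominates {Γ X Y : Type*} [Group Γ] [MetricSpace X] [MetricSpace Y]
    (ρX : Γ → X → X) (ρY : Γ → Y → Y) : Prop :=
  ∃ c : NNReal, c < 1 ∧ ∃ f : X → Y, LipschitzWith c f ∧ EquivariantMap ρX ρY f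

/-- The action of `Γ` on `X` via `ρ` is evanescent: there is an unbounded set `T ⊆ X`
on which all displacement functions of finitely many group elements are bounded. -/
def Evanescent {Γ X : Type*} [Group Γ] [MetricSpace X] (ρ : Γ → X → X) : Prop :=
  ∃ T : Set X, ¬ Bornology.IsBounded T ∧
    ∀ K : Finset Γ, ∃ C : ℝ, ∀ x ∈ T, ∀ γ ∈ K, dist x (ρ γ x) ≤ C

/-- The relator `[a₁,b₁]⋯[a_g,b_g]` of the genus-`g` surface group. -/
def surfaceRelator (g : ℕ) : FreeGroup (Fin g × Bool) :=
  (List.ofFn fun i : Fin g =>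
    FreeGroup.of (i, false) * FreeGroup.of (i, true) *
      (FreeGroup.of (i, false))⁻¹ * (FreeGroup.of (i, true))⁻¹).prod

/-- The fundamental group `Γ = π₁(S_g)` of the closed orientable surface of genus `g`. -/
abbrev SurfaceGroup (g : ℕ) : Type :=
  PresentedGroup ({surfaceRelator g} : Set (FreeGroup (Fin g × Bool)))

/-- `j : Γ → Isom(ℍ²)` is Fuchsian: it is the holonomy of a hyperbolic structure, i.e.
an isometric action which is free and properly discontinuous (uniformly separated at
each point) and cocompact. -/
def IsFuchsian {Γ : Type*} [Group Γ] (j : Γ → UpperHalfPlane → UpperHalfPlane) : Prop :=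
  IsIsomAction Γ j ∧
    (∀ x : UpperHalfPlane, ∃ ε > 0, ∀ γ : Γ, γ ≠ 1 → ε ≤ dist x (j γ x)) ∧
    (∃ R : ℝ, ∀ x y : UpperHalfPlane, ∃ γ : Γ, dist x (j γ y) ≤ R)

/-! ### Equivariant triangulations of the universal cover -/

/-- The 1-skeleton of the lift `T̃` to the universal cover `S̃` of a (finite) triangulation
`T` of the surface `S`, with its deck transformation action of `Γ`: a graph with a free
`Γ`-action, finite fundamental domains `V₀`, `E₀` of vertices and edges, and connected. -/
structure EquivGraph (Γ : Type*) [Group Γ] where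
  V : Type
  E : Type
  src : E → V
  tgt : E → V
  actV : Γ → V → V
  actE : Γ → E → E
  actV_one : ∀ v, actV 1 v = v
  actV_mul : ∀ γ δ v, actV (γ * δ) v = actV γ (actV δ v)
  actE_one : ∀ e, actE 1 e = e
  actE_mul : ∀ γ δ e, actE (γ * δ) e = actE γ (actE δ e)
  src_act : ∀ γ e, src (actE γ e) = actV γ (src e)
  tgt_act : ∀ γ e, tgt (actE γ e) = actV γ (tgt e)
  V₀ : Finset V
  E₀ : Finset E
  fund_V : ∀ v : V, ∃ γ : Γ, ∃ v₀ ∈ V₀, actV γ v₀ = v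
  fund_E : ∀ e : E, ∃ γ : Γ, ∃ e₀ ∈ E₀, actE γ e₀ = e
  free_V : ∀ γ v, actV γ v = v → γ = 1
  conn : ∀ v w : V,
    Relation.ReflTransGen
      (fun a b => ∃ e, (src e = a ∧ tgt e = b) ∨ (src e = b ∧ tgt e = a)) v w

/-- A `ρ`-equivariant map on the vertices of the lifted triangulation. -/
def gEquivMap {Γ : Type*} [Group Γ] {X : Type*} [MetricSpace X]
    (G : EquivGraph Γ) (ρ : Γ → X → X) (F : G.V → X) : Prop :=
  ∀ γ v, F (G.actV γ v) = ρ γ (F v)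

/-- The energy of an equivariant map: the sum over a fundamental domain of edges of the
squared lengths `ℓ_F(e)²`. -/
def energy {Γ : Type*} [Group Γ] {X : Type*} [MetricSpace X]
    (G : EquivGraph Γ) (F : G.V → X) : ℝ :=
  ∑ e ∈ G.E₀, dist (F (G.src e)) (F (G.tgt e)) ^ 2

/-- `F` is harmonic: an equivariant map minimizing the energy among equivariant maps. -/
def Harmonic {Γ : Type*} [Group Γ] {X : Type*} [MetricSpace X]
    (G : EquivGraph Γ) (ρ : Γ → X → X) (F : G.V → X) : Prop :=
  gEquivMap G ρ F ∧ ∀ F' : G.V → X, gEquivMap G ρ F' → energy G F ≤ energy G F'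

/-- `y : Fin N → V` enumerates the neighbours of `x` (with multiplicity): the darts at `x`
are in bijection with `Fin N`, `y i` being the opposite endpoint of the `i`-th dart. -/
def NeighborEnum {Γ : Type*} [Group Γ] (G : EquivGraph Γ) (x : G.V)
    {N : ℕ} (y : Fin N → G.V) : Prop :=
  ∃ d : Fin N ≃ ({e : G.E // G.src e = x} ⊕ {e : G.E // G.tgt e = x}),
    ∀ i, y i = Sum.elim (fun e => G.tgt e.1) (fun e => G.src e.1) (d i)

/-- A lifted triangulation: the lifted graph together with its (2-dimensional) faces and
the deck action on them. The face `f` has vertices `fv f k` and edges `fe f k` joining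
`fv f k` to `fv f (k+1)`. -/
structure EquivTriangulation (Γ : Type*) [Group Γ] extends EquivGraph Γ where
  Fc : Type
  fv : Fc → Fin 3 → V
  fe : Fc → Fin 3 → E
  fe_src : ∀ f k, src (fe f k) = fv f k
  fe_tgt : ∀ f k, tgt (fe f k) = fv f (k + 1)
  actF : Γ → Fc → Fc
  actF_one : ∀ f, actF 1 f = f
  actF_mul : ∀ γ δ f, actF (γ * δ) f = actF γ (actF δ f)
  fv_act : ∀ γ f k, fv (actF γ f) k = actV γ (fv f k)
  fe_act : ∀ γ f k, fe (actF γ f) k = actE γ (fe f k)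

/-- A realization of the universal cover `C̃` of the conical hyperbolic structure
associated to the metric triangulation `(T, ℓ)`: a metric space `Y` with the associated
representation `ρF`, in which each face is realized as an isometrically embedded solid
hyperbolic triangle (of side lengths prescribed by `ℓ`), equivariantly, these triangles
covering `Y` and glued along the combinatorics of `T`. -/
structure ConicalRealization (Γ : Type*) [Group Γ] (T : EquivTriangulation Γ)
    (ℓ : T.E → ℝ) (Y : Type*) [MetricSpace Y] (ρF : Γ → Y → Y) where
  q : T.V → Y
  A : T.Fc → Fin 3 → UpperHalfPlane
  φ : T.Fc → UpperHalfPlane → Y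
  isomAct : IsIsomAction Γ ρF
  q_equiv : ∀ γ v, q (T.actV γ v) = ρF γ (q v)
  side_len : ∀ f k, dist (A f k) (A f (k + 1)) = ℓ (T.fe f k)
  map_vertex : ∀ f k, φ f (A f k) = q (T.fv f k)
  map_isom : ∀ f, ∀ p ∈ mTriangle (A f 0) (A f 1) (A f 2),
    ∀ p' ∈ mTriangle (A f 0) (A f 1) (A f 2), dist (φ f p) (φ f p') = dist p p'
  A_act : ∀ γ f, A (T.actF γ f) = A f
  map_equiv : ∀ γ f p, φ (T.actF γ f) p = ρF γ (φ f p)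
  cover : ∀ y : Y, ∃ f, ∃ p ∈ mTriangle (A f 0) (A f 1) (A f 2), φ f p = y

/-! ### Plain (compact) triangulations and conical structures -/

/-- A triangulation of the surface `S` (combinatorial data only). -/
structure Triang where
  V : Type
  E : Type
  Fc : Type
  src : E → V
  tgt : E → V
  fv : Fc → Fin 3 → V
  fe : Fc → Fin 3 → E
  fe_src : ∀ f k, src (fe f k) = fv f k
  fe_tgt : ∀ f k, tgt (fe f k) = fv f (k + 1)

/-- A realization of the conical hyperbolic structure `C_{(T,ℓ)}`: each face is realized
as an isometrically embedded solid hyperbolic triangle with side lengths prescribed by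
`ℓ`, the faces cover `C` and are glued along edges (`qE e` is the common arclength
parametrization of the edge `e` in `C`). -/
structure Realization (T : Triang) (ℓ : T.E → ℝ) (C : Type*) [MetricSpace C] where
  q : T.V → C
  qE : T.E → ℝ → C
  A : T.Fc → Fin 3 → UpperHalfPlane
  φ : T.Fc → UpperHalfPlane → C
  side_len : ∀ f k, dist (A f k) (A f (k + 1)) = ℓ (T.fe f k)
  map_vertex : ∀ f k, φ f (A f k) = q (T.fv f k)
  map_isom : ∀ f, ∀ p ∈ mTriangle (A f 0) (A f 1) (A f 2),
    ∀ p' ∈ mTriangle (A f 0) (A f 1) (A f 2), dist (φ f p) (φ f p') = dist p p'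
  edge_glue : ∀ f k, ∀ p ∈ mSeg (A f k) (A f (k + 1)),
    φ f p = qE (T.fe f k) (dist (A f k) p)
  cover : ∀ c : C, ∃ f, ∃ p ∈ mTriangle (A f 0) (A f 1) (A f 2), φ f p = c

/-- The sum of the three angles of the hyperbolic triangle realizing the face `f` of the
metric triangulation `(T, ℓ)`. -/
def faceAngleSum (T : Triang) (ℓ : T.E → ℝ) (f : T.Fc) : ℝ :=
  hypCompAngle (ℓ (T.fe f 0)) (ℓ (T.fe f 1)) (ℓ (T.fe f 2)) +
    hypCompAngle (ℓ (T.fe f 1)) (ℓ (T.fe f 2)) (ℓ (T.fe f 0)) +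
    hypCompAngle (ℓ (T.fe f 2)) (ℓ (T.fe f 0)) (ℓ (T.fe f 1))

/-- The length function `ℓ` flattens the face `f`: the triangle inequality is an
equality on `f`. -/
def FlatFace (T : Triang) (ℓ : T.E → ℝ) (f : T.Fc) : Prop :=
  ℓ (T.fe f 0) = ℓ (T.fe f 1) + ℓ (T.fe f 2) ∨
    ℓ (T.fe f 1) = ℓ (T.fe f 2) + ℓ (T.fe f 0) ∨
    ℓ (T.fe f 2) = ℓ (T.fe f 0) + ℓ (T.fe f 1)

/-- Nearest-point projection of `[0, l+ε]` onto `[ε/2, l+ε/2]`, shifted by `-ε/2`. -/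
def projParam (l ε s : ℝ) : ℝ := min (max (s - ε / 2) 0) l

/-- The intrinsic (angular) distance on the unit sphere of `ℝ³`. -/
def sphDist (u v : EuclideanSpace ℝ (Fin 3)) : ℝ := Real.arccos (inner ℝ u v)

/-- Base angle of the isoceles hyperbolic triangle with sides `(a+ε, a+ε, ε)`. -/
def baseAngle (a ε : ℝ) : ℝ :=
  Real.arccos ((Real.cosh ε * Real.cosh (a + ε) - Real.cosh (a + ε)) /
    (Real.sinh ε * Real.sinh (a + ε)))

/-- Apex angle (opposite the side of length `ε`) of the hyperbolic triangle with sides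
`(a+ε, a+ε, ε)`. -/
def apexAngle (a ε : ℝ) : ℝ :=
  Real.arccos ((Real.cosh (a + ε) * Real.cosh (a + ε) - Real.cosh ε) /
    (Real.sinh (a + ε) * Real.sinh (a + ε)))

/-- The angle of the equilateral hyperbolic triangle of side length `ε`. -/
def eqAngle (ε : ℝ) : ℝ :=
  Real.arccos ((Real.cosh ε ^ 2 - Real.cosh ε) / (Real.sinh ε ^ 2))


private lemma inner_mem {u v : EuclideanSpace ℝ (Fin 3)} (hu : ‖u‖ = 1) (hv : ‖v‖ = 1) :
    -1 ≤ (inner ℝ u v : ℝ) ∧ (inner ℝ u v : ℝ) ≤ 1 := by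
  have h := abs_real_inner_le_norm u v
  rw [hu, hv, one_mul] at h
  exact abs_le.1 h

private lemma inner_eq_cos {u v : EuclideanSpace ℝ (Fin 3)} (hu : ‖u‖ = 1) (hv : ‖v‖ = 1) :
    (inner ℝ u v : ℝ) = Real.cos (sphDist u v) :=
  (Real.cos_arccos (inner_mem hu hv).1 (inner_mem hu hv).2).symm

private lemma inner_self_one {u : EuclideanSpace ℝ (Fin 3)} (hu : ‖u‖ = 1) :
    (inner ℝ u u : ℝ) = 1 := by
  rw [real_inner_self_eq_norm_sq, hu]; norm_num

private lemma sphDist_nonneg' (u v : EuclideanSpace ℝ (Fin 3)) : 0 ≤ sphDist u v :=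
  Real.arccos_nonneg _

private lemma sphDist_le_pi (u v : EuclideanSpace ℝ (Fin 3)) : sphDist u v ≤ π :=
  Real.arccos_le_pi _

private lemma sphDist_comm' (u v : EuclideanSpace ℝ (Fin 3)) : sphDist u v = sphDist v u := by
  unfold sphDist; rw [real_inner_comm]

private lemma sphDist_self' {u : EuclideanSpace ℝ (Fin 3)} (hu : ‖u‖ = 1) : sphDist u u = 0 := by
  unfold sphDist
  rw [inner_self_one hu, Real.arccos_one]

private lemma antitone_arccos : Antitone Real.arccos := by
  intro x y h
  rw [Real.arccos_eq_pi_div_two_sub_arcsin, Real.arccos_eq_pi_div_two_sub_arcsin]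
  linarith [Real.monotone_arcsin h]

private lemma sphDist_le {u v : EuclideanSpace ℝ (Fin 3)} {z : ℝ}
    (hz0 : 0 ≤ z) (hzpi : z ≤ π) (h : Real.cos z ≤ inner ℝ u v) : sphDist u v ≤ z := by
  have h2 := antitone_arccos h
  rwa [Real.arccos_cos hz0 hzpi] at h2


private lemma sphDist_eq_of_inner {u v : EuclideanSpace ℝ (Fin 3)} {z : ℝ}
    (hz0 : 0 ≤ z) (hzpi : z ≤ π) (h : (inner ℝ u v : ℝ) = Real.cos z) : sphDist u v = z := by
  unfold sphDist
  rw [h, Real.arccos_cos hz0 hzpi]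

private lemma norm_eq_of_sq {x y : ℝ} (hx : 0 ≤ x) (hy : 0 ≤ y) (h : x ^ 2 = y ^ 2) : x = y := by
  have h2 := congrArg Real.sqrt h
  rwa [Real.sqrt_sq hx, Real.sqrt_sq hy] at h2

private lemma sphDist_triangle' {u v w : EuclideanSpace ℝ (Fin 3)}
    (hu : ‖u‖ = 1) (hv : ‖v‖ = 1) (hw : ‖w‖ = 1) :
    sphDist u w ≤ sphDist u v + sphDist v w := by
  have hα0 := sphDist_nonneg' u v
  have hβ0 := sphDist_nonneg' v w
  have hαπ := sphDist_le_pi u v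
  have hβπ := sphDist_le_pi v w
  by_cases hπ : sphDist u v + sphDist v w ≤ π
  · apply sphDist_le (by linarith) hπ
    have huv : (inner ℝ u v : ℝ) = Real.cos (sphDist u v) := inner_eq_cos hu hv
    have hvu : (inner ℝ v u : ℝ) = Real.cos (sphDist u v) := by
      rw [real_inner_comm]; exact huv
    have hvw : (inner ℝ v w : ℝ) = Real.cos (sphDist v w) := inner_eq_cos hv hw
    have hwv : (inner ℝ w v : ℝ) = Real.cos (sphDist v w) := by
      rw [real_inner_comm]; exact hvw
    have hsa : 0 ≤ Real.sin (sphDist u v) := Real.sin_nonneg_of_nonneg_of_le_pi hα0 hαπ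
    have hsb : 0 ≤ Real.sin (sphDist v w) := Real.sin_nonneg_of_nonneg_of_le_pi hβ0 hβπ
    have hnx : ‖u - Real.cos (sphDist u v) • v‖ = Real.sin (sphDist u v) := by
      apply norm_eq_of_sq (norm_nonneg _) hsa
      rw [← real_inner_self_eq_norm_sq]
      simp only [inner_sub_left, inner_sub_right, real_inner_smul_left, real_inner_smul_right,
        huv, hvu, inner_self_one hu, inner_self_one hv]
      nlinarith [Real.sin_sq_add_cos_sq (sphDist u v)]
    have hny : ‖w - Real.cos (sphDist v w) • v‖ = Real.sin (sphDist v w) := by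
      apply norm_eq_of_sq (norm_nonneg _) hsb
      rw [← real_inner_self_eq_norm_sq]
      simp only [inner_sub_left, inner_sub_right, real_inner_smul_left, real_inner_smul_right,
        hvw, hwv, inner_self_one hw, inner_self_one hv]
      nlinarith [Real.sin_sq_add_cos_sq (sphDist v w)]
    have hcs := abs_real_inner_le_norm (u - Real.cos (sphDist u v) • v)
      (w - Real.cos (sphDist v w) • v)
    rw [hnx, hny] at hcs
    have hcs' := (abs_le.1 hcs).1
    have hxy : (inner ℝ (u - Real.cos (sphDist u v) • v) (w - Real.cos (sphDist v w) • v) : ℝ) =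
        (inner ℝ u w : ℝ) - Real.cos (sphDist u v) * Real.cos (sphDist v w) := by
      simp only [inner_sub_left, inner_sub_right, real_inner_smul_left, real_inner_smul_right,
        huv, hvu, hvw, hwv, inner_self_one hv]
      ring
    rw [hxy] at hcs'
    rw [Real.cos_add]
    linarith
  · linarith [sphDist_le_pi u w]

/-- Interpolation along a spherical geodesic. -/
private lemma sphGeod {u v : EuclideanSpace ℝ (Fin 3)} (hu : ‖u‖ = 1) (hv : ‖v‖ = 1)
    (hlt : sphDist u v < π) {δ : ℝ} (h0 : 0 ≤ δ) (h1 : δ ≤ sphDist u v) :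
    ∃ w, ‖w‖ = 1 ∧ sphDist u w ≤ δ ∧ sphDist w v ≤ sphDist u v - δ := by
  rcases eq_or_lt_of_le (sphDist_nonneg' u v) with hz | hpos
  · refine ⟨u, hu, ?_, ?_⟩
    · rw [sphDist_self' hu]; exact h0
    · linarith
  · have hS : 0 < Real.sin (sphDist u v) := Real.sin_pos_of_pos_of_lt_pi hpos hlt
    have hC : (inner ℝ u v : ℝ) = Real.cos (sphDist u v) := inner_eq_cos hu hv
    have hC' : (inner ℝ v u : ℝ) = Real.cos (sphDist u v) := by rw [real_inner_comm]; exact hC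
    refine ⟨(Real.sin (sphDist u v - δ) / Real.sin (sphDist u v)) • u +
      (Real.sin δ / Real.sin (sphDist u v)) • v, ?_, ?_, ?_⟩
    · apply norm_eq_of_sq (norm_nonneg _) zero_le_one
      rw [← real_inner_self_eq_norm_sq]
      simp only [inner_add_left, inner_add_right, real_inner_smul_left, real_inner_smul_right,
        hC, hC', inner_self_one hu, inner_self_one hv]
      rw [Real.sin_sub]
      field_simp
      nlinarith [Real.sin_sq_add_cos_sq δ, Real.sin_sq_add_cos_sq (sphDist u v)]
    · have hiw : (inner ℝ u ((Real.sin (sphDist u v - δ) / Real.sin (sphDist u v)) • u +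
          (Real.sin δ / Real.sin (sphDist u v)) • v) : ℝ) = Real.cos δ := by
        simp only [inner_add_right, real_inner_smul_right, hC, inner_self_one hu]
        rw [Real.sin_sub]
        field_simp
        ring
      rw [sphDist_eq_of_inner h0 (by linarith) hiw]
    · have hiw : (inner ℝ ((Real.sin (sphDist u v - δ) / Real.sin (sphDist u v)) • u +
          (Real.sin δ / Real.sin (sphDist u v)) • v) v : ℝ) = Real.cos (sphDist u v - δ) := by
        simp only [inner_add_left, real_inner_smul_left, hC, inner_self_one hv]
        rw [Real.sin_sub, Real.cos_sub]
        field_simp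
        linear_combination (-(Real.sin δ)) * Real.sin_sq_add_cos_sq (sphDist u v)
      rw [sphDist_eq_of_inner (by linarith) (by linarith) hiw]

/-- The spherical midpoint lemma. -/
private lemma sphMid {p q : EuclideanSpace ℝ (Fin 3)} (hp : ‖p‖ = 1) (hq : ‖q‖ = 1)
    (hpq : sphDist p q < π) :
    ∃ m, ‖m‖ = 1 ∧ ∀ x, ‖x‖ = 1 → sphDist p x + sphDist x q < π →
      sphDist m x ≤ (sphDist p x + sphDist x q) / 2 := by
  have hc0 := sphDist_nonneg' p q
  have hcos : 0 < Real.cos (sphDist p q / 2) := by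
    apply Real.cos_pos_of_mem_Ioo
    constructor
    · linarith [Real.pi_pos]
    · linarith
  have hnorm : ‖p + q‖ = 2 * Real.cos (sphDist p q / 2) := by
    apply norm_eq_of_sq (norm_nonneg _) (by positivity)
    rw [norm_add_sq_real, hp, hq, inner_eq_cos hp hq]
    have h2 : Real.cos (sphDist p q) = 2 * Real.cos (sphDist p q / 2) ^ 2 - 1 := by
      have h3 := Real.cos_two_mul (sphDist p q / 2)
      rw [show 2 * (sphDist p q / 2) = sphDist p q by ring] at h3
      linarith
    rw [h2]; ring
  have hne : ‖p + q‖ ≠ 0 := by rw [hnorm]; positivity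
  refine ⟨‖p + q‖⁻¹ • (p + q), ?_, ?_⟩
  · rw [norm_smul, Real.norm_eq_abs, abs_of_nonneg (inv_nonneg.2 (norm_nonneg _)), inv_mul_cancel₀ hne]
  · intro x hx hsum
    have ha0 := sphDist_nonneg' p x
    have hb0 := sphDist_nonneg' x q
    have him : (inner ℝ (‖p + q‖⁻¹ • (p + q)) x : ℝ) =
        (Real.cos (sphDist p x) + Real.cos (sphDist x q)) / (2 * Real.cos (sphDist p q / 2)) := by
      rw [real_inner_smul_left, inner_add_left, hnorm]
      rw [inner_eq_cos hp hx, show (inner ℝ q x : ℝ) = Real.cos (sphDist x q) by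
        rw [real_inner_comm]; exact inner_eq_cos hx hq]
      ring
    apply sphDist_le (by linarith) (by linarith [Real.pi_pos])
    rw [him]
    have ht1 : sphDist p x ≤ sphDist p q + sphDist x q := by
      have h4 := sphDist_triangle' hp hq hx
      rw [sphDist_comm' q x] at h4
      exact h4
    have ht2 : sphDist x q ≤ sphDist p x + sphDist p q := by
      have h4 := sphDist_triangle' hx hp hq
      rw [sphDist_comm' x p] at h4
      linarith
    have hd : |sphDist p x - sphDist x q| ≤ sphDist p q :=
      abs_sub_le_iff.2 ⟨by linarith, by linarith⟩
    have h2 : Real.cos (sphDist p q / 2) ≤ Real.cos ((sphDist p x - sphDist x q) / 2) := by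
      rw [← Real.cos_abs ((sphDist p x - sphDist x q) / 2)]
      apply Real.cos_le_cos_of_nonneg_of_le_pi (abs_nonneg _) (by linarith)
      rw [abs_div, abs_two]
      linarith
    have h3 : 0 ≤ Real.cos ((sphDist p x + sphDist x q) / 2) :=
      Real.cos_nonneg_of_mem_Icc ⟨by linarith [Real.pi_pos], by linarith⟩
    rw [Real.cos_add_cos, le_div_iff₀ (by positivity)]
    nlinarith [mul_nonneg h3 (sub_nonneg.2 h2)]


private lemma sphChain (p : ℕ → EuclideanSpace ℝ (Fin 3)) (hu : ∀ i, ‖p i‖ = 1) :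
    ∀ j k, j ≤ k → sphDist (p j) (p k) ≤
      ∑ i ∈ Finset.Ico j k, sphDist (p i) (p (i + 1)) := by
  intro j k hjk
  induction k, hjk using Nat.le_induction with
  | base => simp [sphDist_self' (hu j)]
  | succ k hk ih =>
    have h4 := sphDist_triangle' (hu j) (hu k) (hu (k + 1))
    rw [Finset.sum_Ico_succ_top hk]
    linarith

private lemma sphPoly (n : ℕ) (p : ℕ → EuclideanSpace ℝ (Fin 3)) (hu : ∀ i, ‖p i‖ = 1)
    (hcl : p n = p 0)
    (hP : ∑ i ∈ Finset.range n, sphDist (p i) (p (i + 1)) < 2 * π) :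
    ∃ m, ‖m‖ = 1 ∧ ∀ k ≤ n, sphDist m (p k) ≤
      (∑ i ∈ Finset.range n, sphDist (p i) (p (i + 1))) / 4 := by
  classical
  have hd0 : ∀ i, 0 ≤ sphDist (p i) (p (i + 1)) := fun i => sphDist_nonneg' _ _
  have hchain : ∀ j k : ℕ, j ≤ k → sphDist (p j) (p k) ≤
      (∑ i ∈ Finset.range k, sphDist (p i) (p (i + 1))) -
        (∑ i ∈ Finset.range j, sphDist (p i) (p (i + 1))) := by
    intro j k hjk
    rw [← Finset.sum_Ico_eq_sub _ hjk]
    exact sphChain p hu j k hjk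
  have hcmono : ∀ j k : ℕ, j ≤ k →
      (∑ i ∈ Finset.range j, sphDist (p i) (p (i + 1))) ≤
        ∑ i ∈ Finset.range k, sphDist (p i) (p (i + 1)) :=
    fun j k hjk => Finset.sum_le_sum_of_subset_of_nonneg
      (Finset.range_subset_range.2 hjk) (fun i _ _ => hd0 i)
  obtain ⟨P, hPdef⟩ : ∃ P, P = ∑ i ∈ Finset.range n, sphDist (p i) (p (i + 1)) := ⟨_, rfl⟩
  rw [← hPdef] at hP
  have hP0 : 0 ≤ P := by rw [hPdef]; exact Finset.sum_nonneg fun i _ => hd0 i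
  obtain ⟨i₀, hi₀⟩ : ∃ i₀, i₀ = Nat.findGreatest
      (fun k => (∑ i ∈ Finset.range k, sphDist (p i) (p (i + 1))) ≤ P / 2) n := ⟨_, rfl⟩
  have hspec : (∑ i ∈ Finset.range i₀, sphDist (p i) (p (i + 1))) ≤ P / 2 := by
    rw [hi₀]
    exact Nat.findGreatest_spec
      (P := fun k => (∑ i ∈ Finset.range k, sphDist (p i) (p (i + 1))) ≤ P / 2)
      (m := 0) (Nat.zero_le n)
      (show (∑ i ∈ Finset.range 0, sphDist (p i) (p (i + 1))) ≤ P / 2 by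
        simp only [Finset.range_zero, Finset.sum_empty]; linarith)
  have hle : i₀ ≤ n := by rw [hi₀]; exact Nat.findGreatest_le n
  by_cases hin : i₀ = n
  · -- degenerate case : P = 0
    rw [hin, ← hPdef] at hspec
    refine ⟨p 0, hu 0, fun k hk => ?_⟩
    rw [← hPdef]
    have h5 := hchain 0 k (Nat.zero_le k)
    simp only [Finset.range_zero, Finset.sum_empty, sub_zero] at h5
    have h6 := hcmono k n hk
    rw [← hPdef] at h6
    linarith
  · have hltn : i₀ < n := lt_of_le_of_ne hle hin
    have hgt : ¬ ((∑ i ∈ Finset.range (i₀ + 1), sphDist (p i) (p (i + 1))) ≤ P / 2) := by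
      have h := Nat.findGreatest_is_greatest
        (P := fun k => (∑ i ∈ Finset.range k, sphDist (p i) (p (i + 1))) ≤ P / 2)
        (n := n) (k := i₀ + 1) (by rw [← hi₀]; exact Nat.lt_succ_self i₀) hltn
      exact h
    push_neg at hgt
    rw [Finset.sum_range_succ] at hgt
    obtain ⟨cum, hcum⟩ : ∃ x, x = ∑ i ∈ Finset.range i₀, sphDist (p i) (p (i + 1)) := ⟨_, rfl⟩
    obtain ⟨θ, hθ⟩ : ∃ x, x = sphDist (p i₀) (p (i₀ + 1)) := ⟨_, rfl⟩
    rw [← hcum, ← hθ] at hgt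
    rw [← hcum] at hspec
    have hδ0 : 0 ≤ P / 2 - cum := by linarith
    have hδθ : P / 2 - cum ≤ θ := by linarith
    have hθπ : θ < π := by
      have e1 := hchain 0 i₀ (Nat.zero_le _)
      simp only [Finset.range_zero, Finset.sum_empty, sub_zero] at e1
      rw [← hcum] at e1
      have e2 := hchain (i₀ + 1) n hltn
      rw [Finset.sum_range_succ, ← hcum, ← hθ, ← hPdef] at e2
      have e3 := sphDist_triangle' (hu i₀) (hu 0) (hu (i₀ + 1))
      rw [sphDist_comm' (p i₀) (p 0), ← hθ] at e3
      have e4 : sphDist (p 0) (p (i₀ + 1)) = sphDist (p (i₀ + 1)) (p n) := by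
        rw [hcl, sphDist_comm']
      rw [e4] at e3
      linarith
    obtain ⟨w, hw, hw1, hw2⟩ := sphGeod (hu i₀) (hu (i₀ + 1)) (by rw [← hθ]; exact hθπ) hδ0 (by rw [← hθ]; exact hδθ)
    rw [← hθ] at hw2
    have hp0w : sphDist (p 0) w < π := by
      have e1 := hchain 0 i₀ (Nat.zero_le _)
      simp only [Finset.range_zero, Finset.sum_empty, sub_zero] at e1
      rw [← hcum] at e1
      have e3 := sphDist_triangle' (hu 0) (hu i₀) hw
      linarith
    obtain ⟨m, hm, hmx⟩ := sphMid (hu 0) hw hp0w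
    refine ⟨m, hm, fun k hk => ?_⟩
    have key : sphDist (p 0) (p k) + sphDist (p k) w ≤ P / 2 := by
      rcases le_or_gt k i₀ with h | h
      · have e1 := hchain 0 k (Nat.zero_le _)
        simp only [Finset.range_zero, Finset.sum_empty, sub_zero] at e1
        have e2 := hchain k i₀ h
        rw [← hcum] at e2
        have e3 := sphDist_triangle' (hu k) (hu i₀) hw
        linarith
      · have h' : i₀ + 1 ≤ k := h
        have e1 := hchain k n hk
        rw [← hPdef] at e1
        have e2 := hchain (i₀ + 1) k h'
        rw [Finset.sum_range_succ, ← hcum, ← hθ] at e2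
        have e4 : sphDist (p 0) (p k) = sphDist (p k) (p n) := by
          rw [hcl, sphDist_comm']
        have e3 := sphDist_triangle' (hu k) (hu (i₀ + 1)) hw
        rw [sphDist_comm' (p (i₀ + 1)) (p k)] at e2
        rw [sphDist_comm' w (p (i₀ + 1))] at hw2
        rw [e4]
        linarith
    have h7 := hmx (p k) (hu k) (lt_of_le_of_lt key (by linarith))
    rw [← hPdef]
    linarith

private lemma sphKey (c : ℝ → EuclideanSpace ℝ (Fin 3)) (hc : ∀ t, ‖c t‖ = 1)
    (hcl : c 0 = c 1) (L : ℝ) (hL : L < 2 * π)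
    (hlen : ∀ (n : ℕ) (t : Fin (n + 1) → ℝ), Monotone t →
      (∀ i, t i ∈ Set.Icc (0 : ℝ) 1) →
      ∑ i : Fin n, sphDist (c (t i.castSucc)) (c (t i.succ)) ≤ L)
    (F : Finset ℝ) :
    ∃ m, ‖m‖ = 1 ∧ ∀ s ∈ F, s ∈ Set.Icc (0:ℝ) 1 → sphDist m (c s) ≤ L / 4 := by
  classical
  set F' : Finset ℝ := insert 0 (insert 1 (F.filter (fun s => s ∈ Set.Icc (0:ℝ) 1))) with hF'
  have hmem : ∀ x ∈ F', x ∈ Set.Icc (0:ℝ) 1 := by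
    intro x hx
    rw [hF', Finset.mem_insert, Finset.mem_insert] at hx
    rcases hx with h | h | h
    · subst h; exact ⟨le_refl 0, zero_le_one⟩
    · subst h; exact ⟨zero_le_one, le_refl 1⟩
    · exact (Finset.mem_filter.1 h).2
  have h0F : (0:ℝ) ∈ F' := Finset.mem_insert_self _ _
  have h1F : (1:ℝ) ∈ F' := Finset.mem_insert_of_mem (Finset.mem_insert_self _ _)
  obtain ⟨n, hn⟩ : ∃ n, F'.card = n + 1 :=
    ⟨F'.card - 1, (Nat.succ_pred_eq_of_pos (Finset.card_pos.2 ⟨0, h0F⟩)).symm⟩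
  set e := F'.orderIsoOfFin hn with he
  set t : Fin (n+1) → ℝ := fun i => (e i : ℝ) with ht
  have htmono : Monotone t := fun i j hij => Subtype.coe_le_coe.2 (e.monotone hij)
  have htmem : ∀ i, t i ∈ Set.Icc (0:ℝ) 1 := fun i => hmem _ (e i).2
  have ht0 : t 0 = 0 := by
    obtain ⟨j, hj⟩ := e.surjective ⟨0, h0F⟩
    have h1 : t j = 0 := by simp only [ht]; rw [hj]
    have h2 := htmono (Fin.zero_le j)
    rw [h1] at h2
    exact le_antisymm h2 (htmem 0).1
  have htl : t (Fin.last n) = 1 := by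
    obtain ⟨j, hj⟩ := e.surjective ⟨1, h1F⟩
    have h1 : t j = 1 := by simp only [ht]; rw [hj]
    have h2 := htmono (Fin.le_last j)
    rw [h1] at h2
    exact le_antisymm (htmem _).2 h2
  set p : ℕ → EuclideanSpace ℝ (Fin 3) :=
    fun j => c (t ⟨min j n, Nat.lt_succ_of_le (min_le_right _ _)⟩) with hp
  have hup : ∀ i, ‖p i‖ = 1 := fun i => hc _
  have hpi : ∀ i : Fin (n+1), p (i : ℕ) = c (t i) := by
    intro i
    simp only [hp]
    have h3 : (⟨min ((i : ℕ)) n, Nat.lt_succ_of_le (min_le_right _ _)⟩ : Fin (n+1)) = i :=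
      Fin.ext (Nat.min_eq_left (Nat.lt_succ_iff.1 i.isLt))
    rw [h3]
  have hsum : ∑ i ∈ Finset.range n, sphDist (p i) (p (i+1)) =
      ∑ i : Fin n, sphDist (c (t i.castSucc)) (c (t i.succ)) := by
    rw [← Fin.sum_univ_eq_sum_range (fun j => sphDist (p j) (p (j+1))) n]
    apply Finset.sum_congr rfl
    intro i _
    have h1 : p ((i : ℕ)) = c (t i.castSucc) := by
      have := hpi i.castSucc
      simpa using this
    have h2 : p ((i : ℕ) + 1) = c (t i.succ) := by
      have := hpi i.succ
      simpa using this
    rw [h1, h2]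
  have hP : ∑ i ∈ Finset.range n, sphDist (p i) (p (i+1)) ≤ L := by
    rw [hsum]; exact hlen n t htmono htmem
  have hclp : p n = p 0 := by
    have h1 : p ((Fin.last n : Fin (n+1)) : ℕ) = c (t (Fin.last n)) := hpi (Fin.last n)
    have h2 : p ((0 : Fin (n+1)) : ℕ) = c (t 0) := hpi 0
    simp only [Fin.val_last, Fin.val_zero] at h1 h2
    rw [h1, h2, ht0, htl, ← hcl]
  obtain ⟨m, hm, hmk⟩ := sphPoly n p hup hclp (lt_of_le_of_lt hP hL)
  refine ⟨m, hm, fun s hs hsI => ?_⟩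
  have hsF' : s ∈ F' :=
    Finset.mem_insert_of_mem (Finset.mem_insert_of_mem (Finset.mem_filter.2 ⟨hs, hsI⟩))
  obtain ⟨j, hj⟩ := e.surjective ⟨s, hsF'⟩
  have hjn : (j : ℕ) ≤ n := Nat.lt_succ_iff.1 j.isLt
  have hps : p (j : ℕ) = c s := by
    rw [hpi j]
    have : t j = s := by simp only [ht]; rw [hj]
    rw [this]
  have h8 := hmk (j : ℕ) hjn
  rw [hps] at h8
  have h9 : (∑ i ∈ Finset.range n, sphDist (p i) (p (i+1))) / 4 ≤ L / 4 := by linarith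
  linarith



/-- Every closed rectifiable curve of length `< 2π` on the unit sphere
(with its intrinsic angular metric) has radius `< π/2`. -/
theorem statement_19 (c : ℝ → EuclideanSpace ℝ (Fin 3)) (hc : ∀ t, ‖c t‖ = 1)
    (hclosed : c 0 = c 1) (L : ℝ) (hL : L < 2 * π)
    (hlen : ∀ (n : ℕ) (t : Fin (n + 1) → ℝ), Monotone t →
      (∀ i, t i ∈ Set.Icc (0 : ℝ) 1) →
      ∑ i : Fin n, sphDist (c (t i.castSucc)) (c (t i.succ)) ≤ L) :
    ∃ q : EuclideanSpace ℝ (Fin 3), ‖q‖ = 1 ∧ ∃ r : ℝ, r < π / 2 ∧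
      ∀ t ∈ Set.Icc (0 : ℝ) 1, sphDist q (c t) ≤ r := by
  classical
  have hL0 : 0 ≤ L := by
    have h := hlen 0 (fun _ => 0) monotone_const (fun i => ⟨le_refl (0:ℝ), zero_le_one⟩)
    simpa using h
  have hclosed' : ∀ F : Finset ℝ, IsClosed
      ((Metric.sphere (0 : EuclideanSpace ℝ (Fin 3)) 1) ∩
        ⋂ s ∈ F, {m : EuclideanSpace ℝ (Fin 3) |
          s ∈ Set.Icc (0:ℝ) 1 → sphDist m (c s) ≤ L / 4}) := by
    intro F
    apply IsClosed.inter Metric.isClosed_sphere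
    apply isClosed_biInter
    intro s _
    by_cases hI : s ∈ Set.Icc (0:ℝ) 1
    · have he : {m : EuclideanSpace ℝ (Fin 3) |
          s ∈ Set.Icc (0:ℝ) 1 → sphDist m (c s) ≤ L / 4} =
          {m : EuclideanSpace ℝ (Fin 3) | sphDist m (c s) ≤ L / 4} := by
        ext x; simp [hI]
      rw [he]
      have hcont : Continuous fun m : EuclideanSpace ℝ (Fin 3) => sphDist m (c s) := by
        unfold sphDist
        exact Real.continuous_arccos.comp (continuous_id.inner continuous_const)
      exact isClosed_le hcont continuous_const
    · have he : {m : EuclideanSpace ℝ (Fin 3) |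
          s ∈ Set.Icc (0:ℝ) 1 → sphDist m (c s) ≤ L / 4} = Set.univ := by
        ext x; simp [hI]
      rw [he]
      exact isClosed_univ
  have hdir : Directed (· ⊇ ·) (fun F : Finset ℝ =>
      (Metric.sphere (0 : EuclideanSpace ℝ (Fin 3)) 1) ∩
        ⋂ s ∈ F, {m : EuclideanSpace ℝ (Fin 3) |
          s ∈ Set.Icc (0:ℝ) 1 → sphDist m (c s) ≤ L / 4}) := by
    intro F G
    refine ⟨F ∪ G, fun x hx => ⟨hx.1, ?_⟩, fun x hx => ⟨hx.1, ?_⟩⟩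
    · exact Set.mem_iInter₂.2 fun s hs =>
        Set.mem_iInter₂.1 hx.2 s (Finset.mem_union_left _ hs)
    · exact Set.mem_iInter₂.2 fun s hs =>
        Set.mem_iInter₂.1 hx.2 s (Finset.mem_union_right _ hs)
  have hne : ∀ F : Finset ℝ,
      ((Metric.sphere (0 : EuclideanSpace ℝ (Fin 3)) 1) ∩
        ⋂ s ∈ F, {m : EuclideanSpace ℝ (Fin 3) |
          s ∈ Set.Icc (0:ℝ) 1 → sphDist m (c s) ≤ L / 4}).Nonempty := by
    intro F
    obtain ⟨w, hw1, hw2⟩ := sphKey c hc hclosed L hL hlen F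
    exact ⟨w, mem_sphere_zero_iff_norm.2 hw1,
      Set.mem_iInter₂.2 fun s hs => fun hI => hw2 s hs hI⟩
  have hcpt : ∀ F : Finset ℝ, IsCompact
      ((Metric.sphere (0 : EuclideanSpace ℝ (Fin 3)) 1) ∩
        ⋂ s ∈ F, {m : EuclideanSpace ℝ (Fin 3) |
          s ∈ Set.Icc (0:ℝ) 1 → sphDist m (c s) ≤ L / 4}) := by
    intro F
    apply IsCompact.of_isClosed_subset (isCompact_sphere 0 1) (hclosed' F)
    exact Set.inter_subset_left
  obtain ⟨m, hm⟩ := IsCompact.nonempty_iInter_of_directed_nonempty_isCompact_isClosed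
    _ hdir hne hcpt hclosed'
  refine ⟨m, mem_sphere_zero_iff_norm.1 (Set.mem_iInter.1 hm ∅).1, L / 4,
    by linarith, fun s hs => ?_⟩
  have h2 := (Set.mem_iInter.1 hm {s}).2
  exact Set.mem_iInter₂.1 h2 s (Finset.mem_singleton_self s) hs



end DomCAT
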